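/- Let m ≥ 1 be an integer, let D ⊂ ℝ² ≅ ℂ be the open unit disk, and define n : D → ℝ³ by n(z) = (2 Re(zᵐ), 2 Im(zᵐ), 1 − |z|^{2m}) / (1 + |z|^{2m}) (the inverse stereographic lift of the holomorphic map w(z) = zᵐ). Then |n(z)| = 1 for all z ∈ D, n is conformal with ∂₂n = n × ∂₁n on D, and the Dirichlet energy of n equals ∫_D (|∂₁n|² + |∂₂n|²) dx = 4πm. -/

import Mathlib

open Matrix

/-- Partial derivative of a map `ℂ ≅ ℝ² → ℝ³` along the first coordinate direction. -/
noncomputable def pdz1 (f : ℂ → (Fin 3 → ℝ)) (z : ℂ) : Fin 3 → ℝ := fderiv ℝ f z 1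

/-- Partial derivative of a map `ℂ ≅ ℝ² → ℝ³` along the second coordinate direction. -/
noncomputable def pdz2 (f : ℂ → (Fin 3 → ℝ)) (z : ℂ) : Fin 3 → ℝ := fderiv ℝ f z Complex.I

/-- The inverse stereographic lift of the holomorphic map `w(z) = zᵐ`:
`n(z) = (2 Re(zᵐ), 2 Im(zᵐ), 1 - |z|^(2m)) / (1 + |z|^(2m))`. -/
noncomputable def nconf (m : ℕ) (z : ℂ) : Fin 3 → ℝ :=
  (1 + ‖z‖ ^ (2 * m))⁻¹ •
    ![2 * (z ^ m).re, 2 * (z ^ m).im, 1 - ‖z‖ ^ (2 * m)]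

/-! The map is `σ ∘ (z ↦ zᵐ)` with `σ` the inverse stereographic projection `ℂ → S²`.
At `w`, the differential of `σ` is `2 / (1 + |w|²)` times an orientation-preserving isometry
onto the tangent plane at `σ w`, so it turns multiplication by `i` into `σ w × ·`.
The real differential of a holomorphic `f` is multiplication by `f'`, hence `σ ∘ f` is conformal
with energy density `8 |f'|² / (1 + |f|²)²`. For `f = zᵐ` this density is radial, and polar
coordinates reduce the energy to `2π ∫₀¹ 8 m² r^(2m-1) / (1 + r^(2m))² dr = 2π · 2m`. -/

open Complex MeasureTheory Set Metric

lemma fderiv_comp_apply_of_hasDerivAt {E : Type*} [NormedAddCommGroup E] [NormedSpace ℝ E]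
    {g : ℂ → E} {f : ℂ → ℂ} {z f' : ℂ} (hg : DifferentiableAt ℝ g (f z))
    (hf : HasDerivAt f f' z) (h : ℂ) :
    fderiv ℝ (g ∘ f) z h = fderiv ℝ g (f z) (f' * h) := by
  rw [fderiv_comp z hg (hf.differentiableAt.restrictScalars ℝ),
    (hf.hasFDerivAt.restrictScalars ℝ).fderiv]
  simp [mul_comm]

lemma integral_ball_radial {E : Type*} [NormedAddCommGroup E] [NormedSpace ℝ E]
    (F : ℝ → E) {R : ℝ} (hR : 0 ≤ R) :
    ∫ z in ball (0 : ℂ) R, F ‖z‖ = (2 * Real.pi) • ∫ r in (0)..R, r • F r := by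
  have hball : ball (0 : ℂ) R = norm ⁻¹' Iio R := by ext; simp
  rw [hball, ← integral_indicator (measurableSet_Iio.preimage continuous_norm.measurable)]
  have hind : ∀ y : ℝ, y ^ (Module.finrank ℝ ℂ - 1) • (Iio R).indicator F y =
      (Iio R).indicator (fun r => r • F r) y := fun y => by
    simp [finrank_real_complex, indicator_smul_apply]
  have hcomp : (norm ⁻¹' Iio R).indicator (fun z : ℂ => F ‖z‖) =
      fun z => (Iio R).indicator F ‖z‖ :=
    funext fun z => indicator_comp_right (g := F) norm
  rw [hcomp, integral_fun_norm_addHaar volume ((Iio R).indicator F)]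
  simp_rw [hind]
  rw [setIntegral_indicator measurableSet_Iio, Ioi_inter_Iio, finrank_real_complex,
    intervalIntegral.integral_of_le hR, integral_Ioc_eq_integral_Ioo, measureReal_def,
    Complex.volume_ball]
  simp only [ENNReal.ofReal_one, one_pow, one_mul, ENNReal.coe_toReal, NNReal.coe_real_pi]
  module

noncomputable def invStereographic (w : ℂ) : Fin 3 → ℝ :=
  (1 + ‖w‖ ^ 2)⁻¹ • ![2 * w.re, 2 * w.im, 1 - ‖w‖ ^ 2]

noncomputable def energyDensity (f : ℂ → (Fin 3 → ℝ)) (z : ℂ) : ℝ :=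
  pdz1 f z ⬝ᵥ pdz1 f z + pdz2 f z ⬝ᵥ pdz2 f z

lemma nconf_eq_invStereographic_comp (m : ℕ) : nconf m = invStereographic ∘ (· ^ m) := by
  funext z
  simp [nconf, invStereographic, ← pow_mul, mul_comm]

lemma invStereographic_dotProduct_self (w : ℂ) :
    invStereographic w ⬝ᵥ invStereographic w = 1 := by
  have : 0 < 1 + ‖w‖ ^ 2 := by positivity
  simp only [dotProduct, invStereographic, Pi.smul_apply, smul_eq_mul, Fin.sum_univ_three,
    cons_val_zero, cons_val_one, cons_val]
  field_simp
  rw [Complex.sq_norm, normSq_apply]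
  ring

lemma differentiable_invStereographic : Differentiable ℝ invStereographic := by
  have hN : Differentiable ℝ fun w : ℂ => ‖w‖ ^ 2 :=
    fun w => (hasStrictFDerivAt_norm_sq w).differentiableAt
  refine ((hN.const_add 1).inv fun w => by positivity).smul (differentiable_pi.2 fun i => ?_)
  fin_cases i <;>
    simp only [Fin.zero_eta, Fin.mk_one, Fin.reduceFinMk, cons_val_zero, cons_val_one, cons_val] <;>
    fun_prop

lemma fderiv_invStereographic_apply (w h : ℂ) :
    fderiv ℝ invStereographic w h = (2 / (1 + ‖w‖ ^ 2) ^ 2) •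
      ![(1 + ‖w‖ ^ 2) * h.re - 2 * w.re * (w.re * h.re + w.im * h.im),
        (1 + ‖w‖ ^ 2) * h.im - 2 * w.im * (w.re * h.re + w.im * h.im),
        -2 * (w.re * h.re + w.im * h.im)] := by
  have hN := (hasStrictFDerivAt_norm_sq w).hasFDerivAt
  have hinv :=
    (hasFDerivAt_inv (𝕜 := ℝ) (by positivity : 1 + ‖w‖ ^ 2 ≠ 0)).comp w (hN.const_add 1)
  have hG := (((reCLM.hasFDerivAt (x := w)).const_mul 2).finCons (F' := fun _ => ℝ)
    (((imCLM.hasFDerivAt (x := w)).const_mul 2).finCons (F' := fun _ => ℝ)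
    ((hN.const_sub 1).finCons (F' := fun _ => ℝ) (hasFDerivAt_const ![] w))))
  have hσ : HasFDerivAt invStereographic _ w := hinv.smul hG
  rw [hσ.fderiv]
  ext i
  fin_cases i <;> simp [Complex.inner, Fin.consEquivL, Fin.consLinearEquiv, Fin.consEquiv] <;>
    field_simp <;> ring

lemma fderiv_invStereographic_I_mul (w h : ℂ) :
    fderiv ℝ invStereographic w (I * h) =
      invStereographic w ⨯₃ fderiv ℝ invStereographic w h := by
  have : 0 < 1 + ‖w‖ ^ 2 := by positivity
  rw [fderiv_invStereographic_apply, fderiv_invStereographic_apply]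
  ext i
  fin_cases i <;> simp [invStereographic, crossProduct] <;> field_simp <;>
    rw [Complex.sq_norm, normSq_apply] <;> ring

lemma fderiv_invStereographic_dotProduct_self (w h : ℂ) :
    fderiv ℝ invStereographic w h ⬝ᵥ fderiv ℝ invStereographic w h =
      4 * ‖h‖ ^ 2 / (1 + ‖w‖ ^ 2) ^ 2 := by
  have : 0 < 1 + ‖w‖ ^ 2 := by positivity
  rw [fderiv_invStereographic_apply]
  simp only [dotProduct, Pi.smul_apply, smul_eq_mul, Fin.sum_univ_three, cons_val_zero,
    cons_val_one, cons_val]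
  field_simp
  rw [Complex.sq_norm, normSq_apply, Complex.sq_norm, normSq_apply]
  ring

section HolomorphicLift

variable {f : ℂ → ℂ} {z f' : ℂ}

lemma pdz1_invStereographic_comp (hf : HasDerivAt f f' z) :
    pdz1 (invStereographic ∘ f) z = fderiv ℝ invStereographic (f z) f' := by
  rw [pdz1, fderiv_comp_apply_of_hasDerivAt (differentiable_invStereographic _) hf, mul_one]

lemma pdz2_invStereographic_comp (hf : HasDerivAt f f' z) :
    pdz2 (invStereographic ∘ f) z = fderiv ℝ invStereographic (f z) (I * f') := by
  rw [pdz2, fderiv_comp_apply_of_hasDerivAt (differentiable_invStereographic _) hf, mul_comm]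

theorem pdz2_invStereographic_comp_eq_cross (hf : HasDerivAt f f' z) :
    pdz2 (invStereographic ∘ f) z =
      invStereographic (f z) ⨯₃ pdz1 (invStereographic ∘ f) z := by
  rw [pdz2_invStereographic_comp hf, pdz1_invStereographic_comp hf,
    fderiv_invStereographic_I_mul]

theorem energyDensity_invStereographic_comp (hf : HasDerivAt f f' z) :
    energyDensity (invStereographic ∘ f) z = 8 * ‖f'‖ ^ 2 / (1 + ‖f z‖ ^ 2) ^ 2 := by
  rw [energyDensity, pdz1_invStereographic_comp hf, pdz2_invStereographic_comp hf,
    fderiv_invStereographic_dotProduct_self, fderiv_invStereographic_dotProduct_self, norm_mul,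
    norm_I, one_mul]
  ring

end HolomorphicLift

lemma integral_radial_energyDensity_pow {m : ℕ} (hm : 1 ≤ m) :
    ∫ r in (0 : ℝ)..1, r * (8 * ((m : ℝ) * r ^ (m - 1)) ^ 2 / (1 + (r ^ m) ^ 2) ^ 2) =
      2 * (m : ℝ) := by
  have hderiv : ∀ r : ℝ, HasDerivAt (fun r : ℝ => -(4 * (m : ℝ)) * (1 + (r ^ m) ^ 2)⁻¹)
      (r * (8 * ((m : ℝ) * r ^ (m - 1)) ^ 2 / (1 + (r ^ m) ^ 2) ^ 2)) r := fun r => by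
    have hpos : 0 < 1 + (r ^ m) ^ 2 := by positivity
    have hg : HasDerivAt (fun r : ℝ => 1 + (r ^ m) ^ 2) (2 * r ^ m * (m * r ^ (m - 1))) r := by
      simpa using ((hasDerivAt_pow m r).fun_pow 2).const_add 1
    refine ((hg.inv hpos.ne').const_mul (-(4 * (m : ℝ)))).congr_deriv ?_
    have hr : r * r ^ (m - 1) = r ^ m := by rw [← pow_succ', Nat.sub_add_cancel hm]
    field_simp
    rw [← hr]
    ring
  have hcont : Continuous fun r : ℝ =>
      r * (8 * ((m : ℝ) * r ^ (m - 1)) ^ 2 / (1 + (r ^ m) ^ 2) ^ 2) := by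
    fun_prop (disch := intros; positivity)
  rw [intervalIntegral.integral_eq_sub_of_hasDerivAt (fun r _ => hderiv r)
    (hcont.intervalIntegrable 0 1)]
  simp only [one_pow, zero_pow (by omega : m ≠ 0)]
  ring

/-- On the open unit disk, the inverse stereographic lift of `z ↦ zᵐ` (for `m ≥ 1`)
is a unit-vector field, is conformal (`∂₂n = n × ∂₁n`), and
its Dirichlet energy equals `4πm`. -/
theorem conformal_disk_energy (m : ℕ) (hm : 1 ≤ m) :
    (∀ z ∈ Metric.ball (0 : ℂ) 1, nconf m z ⬝ᵥ nconf m z = 1)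
    ∧ (∀ z ∈ Metric.ball (0 : ℂ) 1, pdz2 (nconf m) z = nconf m z ⨯₃ pdz1 (nconf m) z)
    ∧ (∫ z in Metric.ball (0 : ℂ) 1,
        (pdz1 (nconf m) z ⬝ᵥ pdz1 (nconf m) z + pdz2 (nconf m) z ⬝ᵥ pdz2 (nconf m) z))
      = 4 * Real.pi * m := by
  rw [nconf_eq_invStereographic_comp]
  refine ⟨fun z _ => invStereographic_dotProduct_self _,
    fun z _ => pdz2_invStereographic_comp_eq_cross (hasDerivAt_pow m z), ?_⟩
  change ∫ z in ball 0 1, energyDensity (invStereographic ∘ (· ^ m)) z = _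
  simp_rw [energyDensity_invStereographic_comp (hasDerivAt_pow m _), norm_mul, norm_pow,
    norm_natCast]
  rw [integral_ball_radial (fun r => 8 * ((m : ℝ) * r ^ (m - 1)) ^ 2 / (1 + (r ^ m) ^ 2) ^ 2)
    zero_le_one]
  simp_rw [smul_eq_mul]
  rw [integral_radial_energyDensity_pow hm]
  ring
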